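/- In the Markov setting, for every k ≥ 0 the Lebesgue measure of the k-th surviving set satisfies Leb(Λ_k) = Σ_{i,j∈S} (Q_1^k)_{ij} · Leb(J_i), where Q_1 is the weighted transition matrix with β = 1 (entries a_{ij}·|s_j|^{-1}) and Q_1^k is its k-th matrix power. -/

import Mathlib

/-!
Write `w n i = Leb (Λ_n ∩ J_i)`. Since `J_j ⊆ D`, `Λ_{n+1} ∩ J_j = J_j ∩ F⁻¹ Λ_n`. Split `Λ_n`
along the partition: by the Markov property, the preimage in `J_j` of the part of `Λ_n` lying in
`J_i` is either a copy scaled by `|s_j|⁻¹` (when `F(J_j) ⊇ J_i`) or empty.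
Hence `w (n + 1) = w n ᵥ* Q_1`, so `w k = w 0 ᵥ* Q_1 ^ k` with `w 0 i = Leb J_i` for `i ∈ S`,
and `Leb Λ_k` is the sum of `w k j` over `j ∈ S`.
-/

open MeasureTheory

/-- The open interval `J_j = (c_{j-1}, c_j)` of the Markov partition. -/
def Jset (m : ℕ) (c : Fin (m + 1) → ℝ) (j : Fin m) : Set ℝ :=
  Set.Ioo (c j.castSucc) (c j.succ)

/-- The domain `D = ⋃_{j ∈ S} J_j` (the complement of the holes). -/
def Dset (m : ℕ) (c : Fin (m + 1) → ℝ) (S : Finset (Fin m)) : Set ℝ :=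
  ⋃ j ∈ S, Jset m c j

open Set Function
open scoped Matrix

variable {α ι : Type*}

def survivingSet (F : α → α) (D : Set α) (k : ℕ) : Set α :=
  {x | ∀ j ≤ k, F^[j] x ∈ D}

section survivingSet

variable {F : α → α} {D : Set α}

theorem survivingSet_zero : survivingSet F D 0 = D := by
  simp [survivingSet]

theorem survivingSet_succ (k : ℕ) :
    survivingSet F D (k + 1) = D ∩ F ⁻¹' survivingSet F D k := by
  ext x
  simp only [survivingSet, mem_ofPred_eq, mem_inter_iff, mem_preimage, ← iterate_succ_apply]
  exact ⟨fun h => ⟨h 0 (k + 1).zero_le, fun j hj => h (j + 1) (by omega)⟩,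
    fun ⟨h0, h⟩ j hj => by cases j with | zero => exact h0 | succ j => exact h j (by omega)⟩

theorem survivingSet_subset (k : ℕ) : survivingSet F D k ⊆ D :=
  fun _ hx => hx 0 k.zero_le

end survivingSet

theorem measureReal_eq_sum_inter [MeasurableSpace α] (μ : Measure α) {E : Set α}
    {T : ι → Set α} {S : Finset ι} (hT : Pairwise (Disjoint on T)) (hE : E ⊆ ⋃ i ∈ S, T i)
    (hmeas : ∀ i ∈ S, MeasurableSet (E ∩ T i)) (hfin : ∀ i ∈ S, μ (E ∩ T i) ≠ ⊤) :
    μ.real E = ∑ i ∈ S, μ.real (E ∩ T i) := by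
  conv_lhs => rw [← inter_eq_left.mpr hE, inter_iUnion₂]
  exact measureReal_biUnion_finset
    (fun i _ i' _ h => (hT h).mono inter_subset_right inter_subset_right) hmeas hfin

theorem inter_preimage_eq_empty_of_image_inter_eq_empty {β : Type*} {f : α → β} {U : Set α}
    {V E : Set β} (h : f '' U ∩ V = ∅) (hE : E ⊆ V) : U ∩ f ⁻¹' E = ∅ := by
  rw [← image_eq_empty, image_inter_preimage, ← subset_empty_iff, ← h]
  exact inter_subset_inter_right _ hE

theorem measureReal_preimage_mul_add {a : ℝ} (ha : a ≠ 0) (b : ℝ) (E : Set ℝ) :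
    volume.real ((fun x => a * x + b) ⁻¹' E) = |a|⁻¹ * volume.real E := by
  change volume.real ((a * ·) ⁻¹' ((· + b) ⁻¹' E)) = _
  rw [measureReal_def, Real.volume_preimage_mul_left ha, measure_preimage_add_right,
    ENNReal.toReal_mul, ENNReal.toReal_ofReal (abs_nonneg _), abs_inv, measureReal_def]

theorem measureReal_inter_preimage_of_subset_image {F : ℝ → ℝ} {a b : ℝ} {U V E : Set ℝ}
    (ha : a ≠ 0) (hF : EqOn F (fun x => a * x + b) U) (hV : V ⊆ F '' U) (hE : E ⊆ V) :
    volume.real (U ∩ F ⁻¹' E) = |a|⁻¹ * volume.real E := by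
  have hinj : Injective fun x => a * x + b := fun x y h =>
    mul_left_cancel₀ ha (add_right_cancel h)
  have hsub : (fun x => a * x + b) ⁻¹' E ⊆ U := by
    rw [← hinj.preimage_image U, ← hF.image_eq]
    exact preimage_mono (hE.trans hV)
  rw [hF.inter_preimage_eq, inter_eq_right.mpr hsub, measureReal_preimage_mul_add ha]

section MarkovPartition

variable {J : ι → Set α} {S : Finset ι} {F : α → α}

theorem disjoint_survivingSet_of_notMem (hJ : Pairwise (Disjoint on J)) {i : ι} (hi : i ∉ S)
    (n : ℕ) : Disjoint (survivingSet F (⋃ j ∈ S, J j) n) (J i) := by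
  refine Disjoint.mono_left (survivingSet_subset n) (disjoint_iUnion₂_left.mpr fun j hj => ?_)
  exact hJ (ne_of_mem_of_not_mem hj hi)

theorem survivingSet_succ_inter_of_mem {j : ι} (hj : j ∈ S) (n : ℕ) :
    survivingSet F (⋃ j ∈ S, J j) (n + 1) ∩ J j =
      J j ∩ F ⁻¹' survivingSet F (⋃ j ∈ S, J j) n := by
  rw [survivingSet_succ, inter_right_comm,
    inter_eq_right.mpr (Finset.subset_set_biUnion_of_mem hj), inter_comm]

variable [MeasurableSpace α] {μ : Measure α}

theorem measurableSet_survivingSet (hJm : ∀ j, MeasurableSet (J j))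
    (hFm : ∀ j ∈ S, ∀ E, MeasurableSet E → MeasurableSet (J j ∩ F ⁻¹' E)) (n : ℕ) :
    MeasurableSet (survivingSet F (⋃ j ∈ S, J j) n) := by
  induction n with
  | zero => exact survivingSet_zero (F := F) ▸ Finset.measurableSet_biUnion S fun j _ => hJm j
  | succ n ih =>
    rw [survivingSet_succ, iUnion₂_inter]
    exact Finset.measurableSet_biUnion S fun j hj => hFm j hj _ ih

theorem measureReal_survivingSet_inter_of_notMem (hJ : Pairwise (Disjoint on J)) {i : ι}
    (hi : i ∉ S) (n : ℕ) : μ.real (survivingSet F (⋃ j ∈ S, J j) n ∩ J i) = 0 := by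
  rw [(disjoint_survivingSet_of_notMem hJ hi n).inter_eq, measureReal_empty]

variable (hJ : Pairwise (Disjoint on J)) (hJm : ∀ j, MeasurableSet (J j))
  (hJfin : ∀ j, μ (J j) ≠ ⊤)
  (hFm : ∀ j ∈ S, ∀ E, MeasurableSet E → MeasurableSet (J j ∩ F ⁻¹' E)) {Q : Matrix ι ι ℝ}
  (hstep : ∀ j ∈ S, ∀ i ∈ S, ∀ E ⊆ J i, MeasurableSet E →
    μ.real (J j ∩ F ⁻¹' E) = Q i j * μ.real E)
include hJ hJm hJfin hFm hstep

theorem measureReal_survivingSet_succ_inter {j : ι} (hj : j ∈ S) (n : ℕ) :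
    μ.real (survivingSet F (⋃ j ∈ S, J j) (n + 1) ∩ J j) =
      ∑ i ∈ S, μ.real (survivingSet F (⋃ j ∈ S, J j) n ∩ J i) * Q i j := by
  set L := survivingSet F (⋃ j ∈ S, J j) n
  have hpiece : ∀ i, J j ∩ F ⁻¹' L ∩ F ⁻¹' J i = J j ∩ F ⁻¹' (L ∩ J i) := fun i => by
    rw [inter_assoc, preimage_inter]
  have hL : ∀ i, MeasurableSet (L ∩ J i) := fun i =>
    (measurableSet_survivingSet hJm hFm n).inter (hJm i)
  have hcover : J j ∩ F ⁻¹' L ⊆ ⋃ i ∈ S, F ⁻¹' J i := by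
    rw [← preimage_iUnion₂]
    exact inter_subset_right.trans (preimage_mono (survivingSet_subset n))
  rw [survivingSet_succ_inter_of_mem hj,
    measureReal_eq_sum_inter μ (fun i i' h => (hJ h).preimage F) hcover
      (fun i _ => hpiece i ▸ hFm j hj _ (hL i))
      (fun i _ => measure_ne_top_of_subset (inter_subset_left.trans inter_subset_left) (hJfin j))]
  refine Finset.sum_congr rfl fun i hi => ?_
  rw [hpiece, hstep j hj i hi _ inter_subset_right (hL i), mul_comm]

theorem measureReal_survivingSet_succ_inter_eq_vecMul [Fintype ι]
    (hQ : ∀ i, ∀ j ∉ S, Q i j = 0) (n : ℕ) :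
    (fun j => μ.real (survivingSet F (⋃ j ∈ S, J j) (n + 1) ∩ J j)) =
      (fun i => μ.real (survivingSet F (⋃ j ∈ S, J j) n ∩ J i)) ᵥ* Q := by
  funext j
  by_cases hj : j ∈ S
  · rw [measureReal_survivingSet_succ_inter hJ hJm hJfin hFm hstep hj, Matrix.vecMul,
      dotProduct]
    refine Finset.sum_subset S.subset_univ fun i _ hi => ?_
    rw [measureReal_survivingSet_inter_of_notMem hJ hi, zero_mul]
  · simp [measureReal_survivingSet_inter_of_notMem hJ hj, Matrix.vecMul, dotProduct, hQ _ j hj]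

theorem measureReal_survivingSet_eq_sum_pow [Fintype ι] [DecidableEq ι]
    (hQ : ∀ i, ∀ j ∉ S, Q i j = 0) (k : ℕ) :
    μ.real (survivingSet F (⋃ j ∈ S, J j) k) =
      ∑ i ∈ S, ∑ j ∈ S, (Q ^ k) i j * μ.real (J i) := by
  set w : ℕ → ι → ℝ := fun n i => μ.real (survivingSet F (⋃ j ∈ S, J j) n ∩ J i)
  have hw : ∀ n, w n = w 0 ᵥ* Q ^ n := by
    intro n
    induction n with
    | zero => simp
    | succ n ih =>
      rw [pow_succ, ← Matrix.vecMul_vecMul, ← ih]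
      exact measureReal_survivingSet_succ_inter_eq_vecMul hJ hJm hJfin hFm hstep hQ n
  have hw0 : ∀ i ∈ S, w 0 i = μ.real (J i) := fun i hi => by
    simp only [w, survivingSet_zero, inter_eq_right.mpr (Finset.subset_set_biUnion_of_mem hi)]
  calc μ.real (survivingSet F (⋃ j ∈ S, J j) k) = ∑ j ∈ S, w k j :=
        measureReal_eq_sum_inter μ hJ (survivingSet_subset k)
          (fun j _ => (measurableSet_survivingSet hJm hFm k).inter (hJm j))
          (fun j _ => measure_ne_top_of_subset inter_subset_right (hJfin j))
    _ = ∑ j ∈ S, ∑ i ∈ S, w 0 i * (Q ^ k) i j := by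
        refine Finset.sum_congr rfl fun j _ => ?_
        rw [hw k, Matrix.vecMul, dotProduct]
        exact (Finset.sum_subset S.subset_univ fun i _ hi => by
          simp only [w, measureReal_survivingSet_inter_of_notMem hJ hi, zero_mul]).symm
    _ = ∑ i ∈ S, ∑ j ∈ S, (Q ^ k) i j * μ.real (J i) := by
        rw [Finset.sum_comm]
        refine Finset.sum_congr rfl fun i hi => Finset.sum_congr rfl fun j _ => ?_
        rw [hw0 i hi, mul_comm]

end MarkovPartition

section Partition

variable {m : ℕ} {c : Fin (m + 1) → ℝ}

theorem Jset_nonempty (hc : StrictMono c) (j : Fin m) : (Jset m c j).Nonempty :=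
  nonempty_Ioo.2 (hc j.castSucc_lt_succ)

theorem pairwise_disjoint_Jset (hc : StrictMono c) : Pairwise (Disjoint on Jset m c) :=
  (pairwise_disjoint_on _).2 fun _ _ hij =>
    (Ioc_disjoint_Ioc_of_le (hc.monotone (Fin.succ_le_castSucc_iff.2 hij))).mono
      Ioo_subset_Ioc_self Ioo_subset_Ioc_self

end Partition

theorem measure_surviving_set_eq_sum_pow_weighted_transition_general
    (m : ℕ) (c : Fin (m + 1) → ℝ) (hmono : StrictMono c)
    (S : Finset (Fin m)) (s t : Fin m → ℝ) (F : ℝ → ℝ)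
    (hs : ∀ j ∈ S, 1 < |s j|)
    (hF : ∀ j ∈ S, ∀ x ∈ Jset m c j, F x = s j * x + t j)
    (hMarkov : ∀ i : Fin m, ∀ j ∈ S,
      Jset m c i ⊆ F '' Jset m c j ∨ F '' Jset m c j ∩ Jset m c i = ∅)
    (A : Matrix (Fin m) (Fin m) ℝ)
    (hA1 : ∀ i : Fin m, ∀ j ∈ S, Jset m c i ⊆ F '' Jset m c j → A i j = 1)
    (hA0 : ∀ i j : Fin m, ¬(j ∈ S ∧ Jset m c i ⊆ F '' Jset m c j) → A i j = 0)
    (Q₁ : Matrix (Fin m) (Fin m) ℝ)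
    (hQ₁ : ∀ i j, Q₁ i j = A i j * |s j|⁻¹) :
    ∀ k : ℕ,
      (volume {x : ℝ | ∀ j ≤ k, F^[j] x ∈ Dset m c S}).toReal =
        ∑ i ∈ S, ∑ j ∈ S, (Q₁ ^ k) i j * (volume (Jset m c i)).toReal := by
  have hFm : ∀ j ∈ S, ∀ E, MeasurableSet E → MeasurableSet (Jset m c j ∩ F ⁻¹' E) :=
    fun j hj E hE => by
      rw [EqOn.inter_preimage_eq (hF j hj)]
      exact measurableSet_Ioo.inter (hE.preimage (by fun_prop))
  have hstep : ∀ j ∈ S, ∀ i ∈ S, ∀ E ⊆ Jset m c i, MeasurableSet E →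
      volume.real (Jset m c j ∩ F ⁻¹' E) = Q₁ i j * volume.real E := by
    intro j hj i _ E hE _
    rcases hMarkov i j hj with hcover | hdisj
    · rw [hQ₁, hA1 i j hj hcover, one_mul]
      exact measureReal_inter_preimage_of_subset_image (abs_pos.1 (one_pos.trans (hs j hj)))
        (hF j hj) hcover hE
    · have hA : A i j = 0 := hA0 i j fun ⟨_, hcover⟩ =>
        (Jset_nonempty hmono i).ne_empty (inter_eq_right.mpr hcover ▸ hdisj)
      rw [hQ₁, hA, zero_mul, zero_mul, inter_preimage_eq_empty_of_image_inter_eq_empty hdisj hE,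
        measureReal_empty]
  have hQ : ∀ i, ∀ j ∉ S, Q₁ i j = 0 := fun i j hj => by
    rw [hQ₁, hA0 i j fun h => hj h.1, zero_mul]
  exact measureReal_survivingSet_eq_sum_pow (pairwise_disjoint_Jset hmono)
    (fun _ => measurableSet_Ioo) (fun _ => measure_Ioo_lt_top.ne) hFm hstep hQ

/-- **Measure of the surviving sets.** In the Markov setting, for every `k ≥ 0`
the Lebesgue measure of `Λ_k = {x : F^j(x) ∈ D, j = 0,…,k}` equals
`Σ_{i,j ∈ S} (Q_1^k)_{ij} · Leb(J_i)`, where `Q_1` is the weighted transition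
matrix with `β = 1`. -/
theorem measure_surviving_set_eq_sum_pow_weighted_transition
    (m : ℕ) (hm : 0 < m) (c : Fin (m + 1) → ℝ)
    (hc0 : c 0 = 0) (hc1 : c (Fin.last m) = 1) (hmono : StrictMono c)
    (S : Finset (Fin m)) (s t : Fin m → ℝ) (F : ℝ → ℝ)
    (hs : ∀ j ∈ S, 1 < |s j|)
    (hF : ∀ j ∈ S, ∀ x ∈ Jset m c j, F x = s j * x + t j)
    (hMarkov : ∀ i : Fin m, ∀ j ∈ S,
      Jset m c i ⊆ F '' Jset m c j ∨ F '' Jset m c j ∩ Jset m c i = ∅)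
    (A : Matrix (Fin m) (Fin m) ℝ)
    (hA1 : ∀ i : Fin m, ∀ j ∈ S, Jset m c i ⊆ F '' Jset m c j → A i j = 1)
    (hA0 : ∀ i j : Fin m, ¬(j ∈ S ∧ Jset m c i ⊆ F '' Jset m c j) → A i j = 0)
    (Q₁ : Matrix (Fin m) (Fin m) ℝ)
    (hQ₁ : ∀ i j, Q₁ i j = A i j * |s j|⁻¹) :
    ∀ k : ℕ,
      (volume {x : ℝ | ∀ j ≤ k, F^[j] x ∈ Dset m c S}).toReal =
        ∑ i ∈ S, ∑ j ∈ S, (Q₁ ^ k) i j * (volume (Jset m c i)).toReal :=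
  measure_surviving_set_eq_sum_pow_weighted_transition_general m c hmono S s t F hs hF hMarkov A hA1
    hA0 Q₁ hQ₁
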